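/- arXiv:1201.5475 — 4 statements merged into one kernel-verified Lean document; each statement's English description precedes it below -/
import Mathlib

section
/- Let m ≥ 1, let (0, y₀) with y₀ > 0 be an initial condition at time t₀, and let (0, y^i, t^i), i = 0, …, 2m (with y⁰ = y₀, t⁰ = t₀), be its impact sequence under the perturbed flow with coefficient of restitution r. Then H₀(0, y^{2m}) − H₀(0, y₀) = r² [ ε ∫_{t₀}^{t^{2m}} {H₀, H₁}(φ(t; t₀, 0, y₀, ε, r), t) dt + Σ_{i=0}^{2m−1} ( H₀(0, y^i) − H₀(0, y^i / r) ) ], where the integral of the Poisson bracket along the discontinuous trajectory is defined as the sum over the 2m smooth arcs: on arcs in S⁺ one integrates {H₀⁺, H₁⁺} along φ⁺ and on arcs in S⁻ one integrates {H₀⁻, H₁⁻} along φ⁻. -/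
open Set Filter Function

noncomputable section

/-- The piecewise Hamiltonian vector field `J∇(H₀ + ε H₁)` on one side of the
switching manifold, for `H₀(x,y) = y²/2 + V(x)` and perturbation `H₁(x,y,t)`:
`ẋ = y + ε ∂_y H₁`, `ẏ = −V′(x) − ε ∂_x H₁`. -/
def hamVF (V : ℝ → ℝ) (H₁ : ℝ → ℝ → ℝ → ℝ) (ε : ℝ) (t : ℝ) (z : ℝ × ℝ) : ℝ × ℝ :=
  (z.2 + ε * deriv (fun y => H₁ z.1 y t) z.2,
   -deriv V z.1 - ε * deriv (fun x => H₁ x z.2 t) z.1)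

/-- The Poisson bracket `{H₀, H₁} = ∂_x H₀ ∂_y H₁ − ∂_y H₀ ∂_x H₁` for
`H₀(x,y) = y²/2 + V(x)`. -/
def poissonBracket (V : ℝ → ℝ) (H₁ : ℝ → ℝ → ℝ → ℝ) (z : ℝ × ℝ) (t : ℝ) : ℝ :=
  deriv V z.1 * deriv (fun y => H₁ z.1 y t) z.2 -
    z.2 * deriv (fun x => H₁ x z.2 t) z.1

/-- Partial derivative of `H₁` in `y` as a directional `fderiv` of the joint map. -/
lemma hasDerivAt_H1_y (H₁ : ℝ → ℝ → ℝ → ℝ)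
    (hH₁ : ContDiff ℝ (⊤ : ℕ∞) (fun p : ℝ × ℝ × ℝ => H₁ p.1 p.2.1 p.2.2))
    (x y t : ℝ) :
    HasDerivAt (fun y' => H₁ x y' t)
      (fderiv ℝ (fun p : ℝ × ℝ × ℝ => H₁ p.1 p.2.1 p.2.2) (x, y, t) (0, 1, 0)) y := by
  have hF := (hH₁.differentiable (by simp) (x, y, t)).hasFDerivAt
  have hL : HasDerivAt (fun y' : ℝ => ((x, y', t) : ℝ × ℝ × ℝ)) ((0 : ℝ), (1 : ℝ), (0 : ℝ)) y :=
    HasDerivAt.prodMk (hasDerivAt_const y x) (HasDerivAt.prodMk (hasDerivAt_id y) (hasDerivAt_const y t))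
  exact hF.comp_hasDerivAt y hL

/-- Partial derivative of `H₁` in `x` as a directional `fderiv` of the joint map. -/
lemma hasDerivAt_H1_x (H₁ : ℝ → ℝ → ℝ → ℝ)
    (hH₁ : ContDiff ℝ (⊤ : ℕ∞) (fun p : ℝ × ℝ × ℝ => H₁ p.1 p.2.1 p.2.2))
    (x y t : ℝ) :
    HasDerivAt (fun x' => H₁ x' y t)
      (fderiv ℝ (fun p : ℝ × ℝ × ℝ => H₁ p.1 p.2.1 p.2.2) (x, y, t) (1, 0, 0)) x := by
  have hF := (hH₁.differentiable (by simp) (x, y, t)).hasFDerivAt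
  have hL : HasDerivAt (fun x' : ℝ => ((x', y, t) : ℝ × ℝ × ℝ)) ((1 : ℝ), (0 : ℝ), (0 : ℝ)) x :=
    HasDerivAt.prodMk (hasDerivAt_id x) (HasDerivAt.prodMk (hasDerivAt_const x y) (hasDerivAt_const x t))
  exact hF.comp_hasDerivAt x hL

lemma pb_eq (V : ℝ → ℝ) (H₁ : ℝ → ℝ → ℝ → ℝ)
    (hH₁ : ContDiff ℝ (⊤ : ℕ∞) (fun p : ℝ × ℝ × ℝ => H₁ p.1 p.2.1 p.2.2))
    (z : ℝ × ℝ) (t : ℝ) :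
    poissonBracket V H₁ z t =
      deriv V z.1 * fderiv ℝ (fun p : ℝ × ℝ × ℝ => H₁ p.1 p.2.1 p.2.2) (z.1, z.2, t) (0, 1, 0) -
      z.2 * fderiv ℝ (fun p : ℝ × ℝ × ℝ => H₁ p.1 p.2.1 p.2.2) (z.1, z.2, t) (1, 0, 0) := by
  rw [poissonBracket, (hasDerivAt_H1_y H₁ hH₁ z.1 z.2 t).deriv,
    (hasDerivAt_H1_x H₁ hH₁ z.1 z.2 t).deriv]

/-- Joint continuity of the Poisson bracket for smooth data. -/
lemma pb_cont (V : ℝ → ℝ) (H₁ : ℝ → ℝ → ℝ → ℝ)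
    (hV : ContDiff ℝ (⊤ : ℕ∞) V)
    (hH₁ : ContDiff ℝ (⊤ : ℕ∞) (fun p : ℝ × ℝ × ℝ => H₁ p.1 p.2.1 p.2.2)) :
    Continuous fun p : (ℝ × ℝ) × ℝ => poissonBracket V H₁ p.1 p.2 := by
  have h1 : Continuous (fderiv ℝ (fun p : ℝ × ℝ × ℝ => H₁ p.1 p.2.1 p.2.2)) :=
    hH₁.continuous_fderiv (by simp)
  have he : Continuous fun p : (ℝ × ℝ) × ℝ => ((p.1.1, p.1.2, p.2) : ℝ × ℝ × ℝ) := by fun_prop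
  have h2 : Continuous fun p : (ℝ × ℝ) × ℝ =>
      fderiv ℝ (fun p : ℝ × ℝ × ℝ => H₁ p.1 p.2.1 p.2.2) (p.1.1, p.1.2, p.2)
        ((0 : ℝ), (1 : ℝ), (0 : ℝ)) := (h1.comp he).clm_apply continuous_const
  have h3 : Continuous fun p : (ℝ × ℝ) × ℝ =>
      fderiv ℝ (fun p : ℝ × ℝ × ℝ => H₁ p.1 p.2.1 p.2.2) (p.1.1, p.1.2, p.2)
        ((1 : ℝ), (0 : ℝ), (0 : ℝ)) := (h1.comp he).clm_apply continuous_const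
  have hdV : Continuous (deriv V) := hV.continuous_deriv (by simp)
  have hmain : Continuous fun p : (ℝ × ℝ) × ℝ =>
      deriv V p.1.1 *
          fderiv ℝ (fun p : ℝ × ℝ × ℝ => H₁ p.1 p.2.1 p.2.2) (p.1.1, p.1.2, p.2)
            ((0 : ℝ), (1 : ℝ), (0 : ℝ)) -
        p.1.2 *
          fderiv ℝ (fun p : ℝ × ℝ × ℝ => H₁ p.1 p.2.1 p.2.2) (p.1.1, p.1.2, p.2)
            ((1 : ℝ), (0 : ℝ), (0 : ℝ)) := by fun_prop
  convert hmain using 2 with p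
  exact pb_eq V H₁ hH₁ p.1 p.2

/-- Energy balance along a single smooth arc between two impacts. -/
lemma arc_energy (V : ℝ → ℝ) (H₁ : ℝ → ℝ → ℝ → ℝ)
    (hV : ContDiff ℝ (⊤ : ℕ∞) V)
    (hH₁ : ContDiff ℝ (⊤ : ℕ∞) (fun p : ℝ × ℝ × ℝ => H₁ p.1 p.2.1 p.2.2))
    (ε : ℝ) (γ : ℝ → ℝ × ℝ) (a b ya yb : ℝ) (hab : a < b)
    (hγa : γ a = (0, ya))
    (hca : ContinuousWithinAt γ (Set.Ici a) a)
    (hcb : Filter.Tendsto γ (nhdsWithin b (Set.Iio b)) (nhds (0, yb)))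
    (hode : ∀ s ∈ Set.Ioo a b, HasDerivAt γ (hamVF V H₁ ε s (γ s)) s) :
    yb ^ 2 / 2 - ya ^ 2 / 2 = ε * ∫ t in a..b, poissonBracket V H₁ (γ t) t := by
  set γ' : ℝ → ℝ × ℝ := Function.update γ b (0, yb) with hγ'def
  have hEq : ∀ t, t ≠ b → γ' t = γ t := fun t ht => Function.update_of_ne ht _ _
  have hγ'b : γ' b = (0, yb) := Function.update_self _ _ _
  have hcont : ContinuousOn γ' (Icc a b) := by
    intro x hx
    rcases eq_or_ne x b with rfl | hxb
    · have h1 : Tendsto γ' (nhdsWithin x (Iio x)) (nhds (0, yb)) := by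
        apply hcb.congr'
        filter_upwards [self_mem_nhdsWithin] with t ht
        exact (hEq t (ne_of_lt ht)).symm
      have h2 : Tendsto γ' (nhdsWithin x {x}) (nhds (0, yb)) := by
        rw [nhdsWithin_singleton, ← hγ'b]
        exact tendsto_pure_nhds γ' x
      have h3 : Tendsto γ' (nhdsWithin x (Icc a x)) (nhds (0, yb)) := by
        refine Filter.Tendsto.mono_left ?_ (nhdsWithin_mono x Icc_subset_Iic_self)
        rw [← Set.Iio_union_right, nhdsWithin_union, Filter.tendsto_sup]
        exact ⟨h1, h2⟩
      rw [ContinuousWithinAt, hγ'b]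
      exact h3
    · have hx' : ContinuousWithinAt γ (Icc a b) x := by
        rcases eq_or_lt_of_le hx.1 with heq | hax
        · exact heq ▸ (hca.mono Icc_subset_Ici_self)
        · exact ((hode x ⟨hax, lt_of_le_of_ne hx.2 hxb⟩).continuousAt).continuousWithinAt
      have hev : γ' =ᶠ[nhdsWithin x (Icc a b)] γ := by
        filter_upwards [mem_nhdsWithin_of_mem_nhds (isOpen_compl_singleton.mem_nhds hxb)]
          with t ht
        exact hEq t ht
      exact hx'.congr_of_eventuallyEq hev (hEq x hxb)
  set f : ℝ → ℝ := fun t => (γ' t).2 ^ 2 / 2 + V (γ' t).1 with hfdef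
  have hH0c : Continuous fun z : ℝ × ℝ => z.2 ^ 2 / 2 + V z.1 := by
    have := hV.continuous; fun_prop
  have hfc : ContinuousOn f (Icc a b) := hH0c.comp_continuousOn hcont
  have hder : ∀ x ∈ Ioo a b, HasDerivAt f (ε * poissonBracket V H₁ (γ x) x) x := by
    intro x hx
    have hγx := hode x hx
    set z := γ x with hz
    have h1 : HasFDerivAt (fun w : ℝ × ℝ => V w.1)
        ((deriv V z.1) • ContinuousLinearMap.fst ℝ ℝ ℝ) z :=
      ((hV.differentiable (by simp) z.1).hasDerivAt).comp_hasFDerivAt z hasFDerivAt_fst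
    have hd : HasDerivAt (fun y : ℝ => y ^ 2 / 2) z.2 z.2 := by
      have := (hasDerivAt_pow 2 z.2).div_const 2
      norm_num at this
      exact this
    have h2 : HasFDerivAt (fun w : ℝ × ℝ => w.2 ^ 2 / 2)
        (z.2 • ContinuousLinearMap.snd ℝ ℝ ℝ) z := hd.comp_hasFDerivAt z hasFDerivAt_snd
    have hH0 : HasFDerivAt (fun w : ℝ × ℝ => w.2 ^ 2 / 2 + V w.1)
        (z.2 • ContinuousLinearMap.snd ℝ ℝ ℝ + (deriv V z.1) • ContinuousLinearMap.fst ℝ ℝ ℝ)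
        z := h2.add h1
    have hcomp := hH0.comp_hasDerivAt x hγx
    simp only [Function.comp_def] at hcomp
    have hval : (z.2 • ContinuousLinearMap.snd ℝ ℝ ℝ +
        (deriv V z.1) • ContinuousLinearMap.fst ℝ ℝ ℝ) (hamVF V H₁ ε x z)
        = ε * poissonBracket V H₁ z x := by
      simp only [hamVF, poissonBracket, ContinuousLinearMap.add_apply,
        ContinuousLinearMap.smul_apply, ContinuousLinearMap.coe_fst',
        ContinuousLinearMap.coe_snd', smul_eq_mul]
      ring
    rw [hval] at hcomp
    have hev : f =ᶠ[nhds x] (fun t => (γ t).2 ^ 2 / 2 + V (γ t).1) := by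
      filter_upwards [isOpen_compl_singleton.mem_nhds (ne_of_lt hx.2)] with t ht
      simp only [hfdef, hEq t ht]
    exact hcomp.congr_of_eventuallyEq hev
  have hintc : ContinuousOn (fun t => ε * poissonBracket V H₁ (γ' t) t) (Icc a b) := by
    apply ContinuousOn.mul continuousOn_const
    exact (pb_cont V H₁ hV hH₁).comp_continuousOn (hcont.prodMk continuousOn_id)
  have hint : IntervalIntegrable (fun t => ε * poissonBracket V H₁ (γ' t) t)
      MeasureTheory.volume a b := by
    apply ContinuousOn.intervalIntegrable
    rwa [Set.uIcc_of_le hab.le]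
  have hftc := intervalIntegral.integral_eq_sub_of_hasDeriv_right_of_le hab.le hfc
    (fun x hx => by
      have h := (hder x hx).hasDerivWithinAt (s := Set.Ioi x)
      rwa [hEq x (ne_of_lt hx.2)]) hint
  have hae : (∫ t in a..b, ε * poissonBracket V H₁ (γ' t) t)
      = ∫ t in a..b, ε * poissonBracket V H₁ (γ t) t := by
    apply intervalIntegral.integral_congr_ae
    have hb : ∀ᵐ t : ℝ, t ≠ b := by
      have h0 : (MeasureTheory.volume : MeasureTheory.Measure ℝ) {b} = 0 :=
        MeasureTheory.measure_singleton b
      rw [MeasureTheory.ae_iff]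
      simpa using h0
    filter_upwards [hb] with t ht _
    rw [hEq t ht]
  have hfa : f a = ya ^ 2 / 2 + V 0 := by
    simp [hfdef, hEq a (ne_of_lt hab), hγa]
  have hfb : f b = yb ^ 2 / 2 + V 0 := by simp [hfdef, hγ'b]
  rw [← intervalIntegral.integral_const_mul, ← hae, hftc, hfa, hfb]
  ring

lemma sum_range_two_mul (f : ℕ → ℝ) (m : ℕ) :
    ∑ i ∈ Finset.range (2 * m), f i = ∑ i ∈ Finset.range m, (f (2 * i) + f (2 * i + 1)) := by
  induction m with
  | zero => simp
  | succ n ih =>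
    rw [Finset.sum_range_succ, ← ih, show 2 * (n + 1) = 2 * n + 1 + 1 by ring,
      Finset.sum_range_succ, Finset.sum_range_succ]
    ring

/-- Lemma 1: energy balance along the impact sequence.  Let
`(0, yseq i, tseq i)`, `i = 0, …, 2m`, be the impact sequence of
`(0, y₀, t₀)` for the perturbed flow with restitution coefficient `r`: the
trajectory `γ` starts at `(0, y₀)` at `t₀`, lies alternately in
`S⁺ = {x > 0}` and `S⁻ = {x < 0}` between consecutive impacts, solves the
corresponding smooth Hamiltonian system there, and at each impact time
`tseq i` its left limit `(0, yseq i / r)` is instantaneously replaced by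
`γ(tseq i) = (0, yseq i)`.  Then, with `H₀(0, y) = y²/2`,
`H₀(0, y^{2m}) − H₀(0, y₀) = r² [ ε ∫ {H₀,H₁} dt + Σ_{i=0}^{2m−1}
(H₀(0, y^i) − H₀(0, y^i/r)) ]`, where the integral along the discontinuous
trajectory is the sum over the `2m` smooth arcs of the integrals of
`{H₀⁺,H₁⁺}` (arcs in `S⁺`) and `{H₀⁻,H₁⁻}` (arcs in `S⁻`). -/
theorem energy_balance_impact_sequence
    (Vp Vm : ℝ → ℝ) (H₁p H₁m : ℝ → ℝ → ℝ → ℝ)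
    (hVp : ContDiff ℝ (⊤ : ℕ∞) Vp) (hVm : ContDiff ℝ (⊤ : ℕ∞) Vm)
    (hVp0 : Vp 0 = 0) (hVm0 : Vm 0 = 0)
    (hH₁p : ContDiff ℝ (⊤ : ℕ∞) (fun p : ℝ × ℝ × ℝ => H₁p p.1 p.2.1 p.2.2))
    (hH₁m : ContDiff ℝ (⊤ : ℕ∞) (fun p : ℝ × ℝ × ℝ => H₁m p.1 p.2.1 p.2.2))
    (hmatch : ∀ y t, H₁p 0 y t = H₁m 0 y t)
    (ε r : ℝ) (hr : 0 < r) (hr1 : r ≤ 1)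
    (m : ℕ) (hm : 1 ≤ m)
    (γ : ℝ → ℝ × ℝ) (tseq yseq : ℕ → ℝ) (t₀ y₀ : ℝ)
    (ht0 : tseq 0 = t₀) (hy0 : yseq 0 = y₀) (hy0pos : 0 < y₀)
    (hmono : ∀ i < 2 * m, tseq i < tseq (i + 1))
    (hvals : ∀ i ≤ 2 * m, γ (tseq i) = (0, yseq i))
    (hside : ∀ i < 2 * m, ∀ s ∈ Set.Ioo (tseq i) (tseq (i + 1)),
      if Even i then 0 < (γ s).1 else (γ s).1 < 0)
    (hode : ∀ i < 2 * m, ∀ s ∈ Set.Ioo (tseq i) (tseq (i + 1)),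
      HasDerivAt γ
        (hamVF (if Even i then Vp else Vm) (if Even i then H₁p else H₁m)
          ε s (γ s)) s)
    (hrc : ∀ i ≤ 2 * m, ContinuousWithinAt γ (Set.Ici (tseq i)) (tseq i))
    (hjump : ∀ i, 1 ≤ i → i ≤ 2 * m →
      Filter.Tendsto γ (nhdsWithin (tseq i) (Set.Iio (tseq i)))
        (nhds (0, yseq i / r))) :
    (yseq (2 * m)) ^ 2 / 2 - y₀ ^ 2 / 2 =
      r ^ 2 *
        (ε * (∑ i ∈ Finset.range m,
            ((∫ t in (tseq (2 * i))..(tseq (2 * i + 1)),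
                  poissonBracket Vp H₁p (γ t) t) +
              ∫ t in (tseq (2 * i + 1))..(tseq (2 * i + 2)),
                  poissonBracket Vm H₁m (γ t) t)) +
          ∑ i ∈ Finset.range (2 * m),
            ((yseq i) ^ 2 / 2 - (yseq i / r) ^ 2 / 2)) := by
  set I : ℕ → ℝ := fun i =>
    ∫ t in (tseq i)..(tseq (i + 1)),
      poissonBracket (if Even i then Vp else Vm) (if Even i then H₁p else H₁m) (γ t) t
    with hIdef
  have key : ∀ i < 2 * m, (yseq (i + 1) / r) ^ 2 / 2 - (yseq i) ^ 2 / 2 = ε * I i := by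
    intro i hi
    exact arc_energy (if Even i then Vp else Vm) (if Even i then H₁p else H₁m)
      (by split <;> assumption) (by split <;> assumption) ε γ
      (tseq i) (tseq (i + 1)) (yseq i) (yseq (i + 1) / r) (hmono i hi)
      (hvals i (by omega)) (hrc i (by omega)) (hjump (i + 1) (by omega) (by omega))
      (hode i hi)
  have P : ∀ n ≤ 2 * m, yseq n ^ 2 / 2 - y₀ ^ 2 / 2 =
      r ^ 2 * (ε * ∑ i ∈ Finset.range n, I i +
        ∑ i ∈ Finset.range n, ((yseq i) ^ 2 / 2 - (yseq i / r) ^ 2 / 2)) := by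
    intro n
    induction n with
    | zero => simp [hy0]
    | succ n ih =>
      intro hn
      have hn' : n < 2 * m := by omega
      have IH := ih (by omega)
      have hr2 : (r : ℝ) ^ 2 ≠ 0 := pow_ne_zero _ (ne_of_gt hr)
      have k := key n hn'
      rw [div_pow] at k
      have key' : yseq (n + 1) ^ 2 / 2 = r ^ 2 * ((yseq n) ^ 2 / 2 + ε * I n) := by
        field_simp at k ⊢
        linarith
      have hcancel : r ^ 2 * (yseq n ^ 2 / r ^ 2) = yseq n ^ 2 :=
        mul_div_cancel₀ _ hr2
      rw [Finset.sum_range_succ, Finset.sum_range_succ, div_pow]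
      linear_combination IH + key' + (1 / 2) * hcancel
  have hmain := P (2 * m) le_rfl
  rw [sum_range_two_mul I m] at hmain
  have hpair : ∀ i, I (2 * i) + I (2 * i + 1) =
      (∫ t in (tseq (2 * i))..(tseq (2 * i + 1)), poissonBracket Vp H₁p (γ t) t) +
        ∫ t in (tseq (2 * i + 1))..(tseq (2 * i + 2)), poissonBracket Vm H₁m (γ t) t := by
    intro i
    have h1 : Even (2 * i) := even_two_mul i
    have h2 : ¬ Even (2 * i + 1) := by simp [Nat.even_add_one, h1]
    simp only [hIdef, h1, h2, if_true, if_false]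
  calc (yseq (2 * m)) ^ 2 / 2 - y₀ ^ 2 / 2
      = r ^ 2 * (ε * ∑ i ∈ Finset.range m, (I (2 * i) + I (2 * i + 1)) +
        ∑ i ∈ Finset.range (2 * m), ((yseq i) ^ 2 / 2 - (yseq i / r) ^ 2 / 2)) := hmain
    _ = _ := by
        rw [Finset.sum_congr rfl fun i _ => hpair i]
end
end

section
/- For every y₀ with 0 < y₀ < 1, the improper integral 4 ∫₀^{1 − √(1 − y₀²)} dx / √(y₀² + x² − 2x) converges and equals 2 ln((1 + y₀)/(1 − y₀)). -/
/-! With `a = √(1 - y₀²)` the radicand is `(1 - x)² - a²`, so `u = 1 - x` turns the integral into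
`∫ₐ¹ du / √(u² - a²)`. Its primitive `arcosh (u / a)` is increasing, which gives integrability
for free (a nonnegative derivative is integrable) and the value `arcosh (1 / a)`. Since
`cosh (artanh y₀) = 1 / √(1 - y₀²)`, this is `artanh y₀ = ½ log ((1 + y₀) / (1 - y₀))`. -/

open Real Set intervalIntegral

theorem Real.hasDerivAt_arcosh_div {a u : ℝ} (ha : 0 < a) (hu : a < u) :
    HasDerivAt (fun u => arcosh (u / a)) (√(u ^ 2 - a ^ 2))⁻¹ u := by
  have hsqrt : √((u / a) ^ 2 - 1) = √(u ^ 2 - a ^ 2) / a := by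
    rw [show (u / a) ^ 2 - 1 = (u ^ 2 - a ^ 2) / a ^ 2 by field_simp, sqrt_div' _ (sq_nonneg a),
      sqrt_sq ha.le]
  refine ((hasDerivAt_arcosh ((one_lt_div ha).2 hu)).comp u
    ((hasDerivAt_id u).div_const a)).congr_deriv ?_
  rw [hsqrt]
  field_simp

theorem Real.continuousOn_arcosh_div {a : ℝ} (ha : 0 < a) :
    ContinuousOn (fun u => arcosh (u / a)) (Ici a) :=
  continuousOn_arcosh.comp (continuousOn_id.div_const a)
    fun _ hu => (one_le_div ha).2 hu

theorem intervalIntegrable_inv_sqrt_sq_sub_sq {a c : ℝ} (ha : 0 < a) (hac : a ≤ c) :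
    IntervalIntegrable (fun u => (√(u ^ 2 - a ^ 2))⁻¹) MeasureTheory.volume a c :=
  (intervalIntegrable_iff_integrableOn_Ioc_of_le hac).2 <|
    integrableOn_deriv_of_nonneg ((continuousOn_arcosh_div ha).mono Icc_subset_Ici_self)
      (fun _ hu => hasDerivAt_arcosh_div ha hu.1) fun _ _ => by positivity

theorem integral_inv_sqrt_sq_sub_sq {a c : ℝ} (ha : 0 < a) (hac : a ≤ c) :
    ∫ u in a..c, (√(u ^ 2 - a ^ 2))⁻¹ = arcosh (c / a) := by
  rw [integral_eq_sub_of_hasDeriv_right_of_le hac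
    ((continuousOn_arcosh_div ha).mono Icc_subset_Ici_self)
    (fun _ hu => (hasDerivAt_arcosh_div ha hu.1).hasDerivWithinAt)
    (intervalIntegrable_inv_sqrt_sq_sub_sq ha hac), div_self ha.ne', arcosh_zero, sub_zero]

theorem Real.arcosh_one_div_sqrt_one_sub_sq {y : ℝ} (hy₀ : 0 ≤ y) (hy₁ : y < 1) :
    arcosh (1 / √(1 - y ^ 2)) = artanh y := by
  rw [← cosh_artanh ⟨by linarith, hy₁⟩, arcosh_cosh]
  rw [← artanh_zero]
  exact artanh_le_artanh (by norm_num) hy₁ hy₀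

/-- For every `y₀` with `0 < y₀ < 1`, the improper integral
`4 ∫₀^{1 − √(1 − y₀²)} dx / √(y₀² + x² − 2x)` converges and equals
`2 ln((1 + y₀)/(1 − y₀))`.  (This is the period of the periodic orbit of the
unperturbed linearized rocking block through `(0, y₀)`.) -/
theorem period_linearized_rocking_block (y₀ : ℝ) (h0 : 0 < y₀) (h1 : y₀ < 1) :
    IntervalIntegrable (fun x : ℝ => 1 / Real.sqrt (y₀ ^ 2 + x ^ 2 - 2 * x))
      MeasureTheory.volume 0 (1 - Real.sqrt (1 - y₀ ^ 2)) ∧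
    4 * ∫ x in (0:ℝ)..(1 - Real.sqrt (1 - y₀ ^ 2)),
        1 / Real.sqrt (y₀ ^ 2 + x ^ 2 - 2 * x)
      = 2 * Real.log ((1 + y₀) / (1 - y₀)) := by
  set a := √(1 - y₀ ^ 2)
  have ha : 0 < a := sqrt_pos.2 (by nlinarith)
  have ha₁ : a ≤ 1 := sqrt_le_one.2 (by nlinarith)
  have hintegrand : (fun x : ℝ => 1 / √(y₀ ^ 2 + x ^ 2 - 2 * x)) =
      fun x => (√((1 - x) ^ 2 - a ^ 2))⁻¹ := by
    funext x
    rw [sq_sqrt (by nlinarith), one_div]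
    ring_nf
  rw [hintegrand]
  refine ⟨by simpa using ((intervalIntegrable_inv_sqrt_sq_sub_sq ha ha₁).comp_sub_left 1).symm, ?_⟩
  rw [integral_comp_sub_left (fun u => (√(u ^ 2 - a ^ 2))⁻¹), sub_zero, sub_sub_cancel,
    integral_inv_sqrt_sq_sub_sq ha ha₁, arcosh_one_div_sqrt_one_sub_sq h0.le h1,
    artanh_eq_half_log ⟨by linarith, h1.le⟩]
  ring
end

section
/- Let ω > 0, T = 2π/ω, let n be an odd positive integer, and set ȳ₀ = (e^{nT/2} − 1)/(e^{nT/2} + 1), C₁ = (ȳ₀ − 1)/2 and C₂ = −(ȳ₀ + 1)/2. Then for every t₀ ∈ ℝ, −[ ∫₀^{nT/2} (C₁ eᵗ − C₂ e^{−t}) cos(ω(t + t₀)) dt + ∫_{nT/2}^{nT} (−C₁ e^{t − nT/2} + C₂ e^{−t + nT/2}) cos(ω(t + t₀)) dt ] = −(4/(ω² + 1)) cos(ω t₀). In particular this function of t₀ has exactly two zeros in [0, T), at t₀ = T/4 and t₀ = 3T/4, and both are simple. -/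
/-!
Shifting the second integral by the half period `a = nT/2` turns its integrand into the first
one: the second half of the orbit is the point reflection of the first, and since `n` is odd the
forcing `cos (ω t)` changes sign over `a`. Hence `M = −2 ∫₀^a (C₁eᵗ − C₂e^{−t}) cos(ω(t + t₀)) dt`,
an elementary integral. The choice of `ȳ₀` makes `C₁(eᵃ + 1) = C₂(e^{−a} + 1) = −1`, which is
exactly what is needed for the boundary terms at `0` and `a` to collapse to `2 cos(ω t₀)/(ω² + 1)`.
The zeros and their simplicity are then those of the cosine.
-/

noncomputable section

/-- The subharmonic Melnikov function `M^{n,1}` of the linearized rocking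
block, written as `−∫₀^{nT} Π_y(q_c(t)) cos(ω(t + t₀)) dt` with `a = nT/2`:
the `y`-component of the unperturbed orbit is `C₁eᵗ − C₂e^{−t}` on `[0, a]`
and `−C₁e^{t−a} + C₂e^{−t+a}` on `[a, 2a]`. -/
def rockingMelnikov (C₁ C₂ a ω : ℝ) (t₀ : ℝ) : ℝ :=
  -((∫ t in (0:ℝ)..a,
      (C₁ * Real.exp t - C₂ * Real.exp (-t)) * Real.cos (ω * (t + t₀))) +
    ∫ t in a..(2 * a),
      (-C₁ * Real.exp (t - a) + C₂ * Real.exp (-t + a)) * Real.cos (ω * (t + t₀)))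

open Real

namespace Real

lemma cos_add_odd_mul_pi {n : ℕ} (hn : Odd n) (x : ℝ) : cos (x + n * π) = -cos x := by
  rw [cos_add_nat_mul_pi, hn.neg_one_pow, neg_one_mul]

lemma sin_add_odd_mul_pi {n : ℕ} (hn : Odd n) (x : ℝ) : sin (x + n * π) = -sin x := by
  rw [sin_add_nat_mul_pi, hn.neg_one_pow, neg_one_mul]

lemma cos_eq_zero_iff_of_mem_Ico {x : ℝ} (hx : x ∈ Set.Ico 0 (2 * π)) :
    cos x = 0 ↔ x = π / 2 ∨ x = π / 2 + π := by
  constructor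
  · intro h
    obtain ⟨k, rfl⟩ := cos_eq_zero_iff.mp h
    obtain ⟨hx₀, hx₁⟩ := hx
    have hk₀ : (-1 : ℝ) < k := by nlinarith [pi_pos]
    have hk₁ : (k : ℝ) < 2 := by nlinarith [pi_pos]
    obtain rfl | rfl : k = 0 ∨ k = 1 := by
      have : -1 < k := by exact_mod_cast hk₀
      have : k < 2 := by exact_mod_cast hk₁
      omega
    · left; push_cast; ring
    · right; push_cast; ring
  · rintro (rfl | rfl)
    · exact cos_pi_div_two
    · rw [cos_add_pi, cos_pi_div_two, neg_zero]

lemma hasDerivAt_const_mul_cos_mul (K ω t : ℝ) :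
    HasDerivAt (fun t => K * cos (ω * t)) (-(K * ω * sin (ω * t))) t :=
  (((hasDerivAt_id' t).const_mul ω).cos.const_mul K).congr_deriv (by ring)

end Real

lemma hasDerivAt_exp_mul_cos {c ω : ℝ} (h : c ^ 2 + ω ^ 2 ≠ 0) (s t : ℝ) :
    HasDerivAt
      (fun t => exp (c * t) * (c * cos (ω * (t + s)) + ω * sin (ω * (t + s))) / (c ^ 2 + ω ^ 2))
      (exp (c * t) * cos (ω * (t + s))) t := by
  have hθ : HasDerivAt (fun t => ω * (t + s)) ω t := by
    simpa using ((hasDerivAt_id t).add_const s).const_mul ω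
  have hexp : HasDerivAt (fun t => exp (c * t)) (exp (c * t) * c) t := by
    simpa using ((hasDerivAt_id t).const_mul c).exp
  refine ((hexp.mul ((hθ.cos.const_mul c).add (hθ.sin.const_mul ω))).div_const _).congr_deriv ?_
  simp only [Pi.add_apply]
  field_simp
  ring

lemma integral_exp_mul_cos {c ω : ℝ} (h : c ^ 2 + ω ^ 2 ≠ 0) (s a : ℝ) :
    ∫ t in (0:ℝ)..a, exp (c * t) * cos (ω * (t + s)) =
      (exp (c * a) * (c * cos (ω * (a + s)) + ω * sin (ω * (a + s)))
        - (c * cos (ω * s) + ω * sin (ω * s))) / (c ^ 2 + ω ^ 2) := by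
  rw [intervalIntegral.integral_eq_sub_of_hasDerivAt (fun t _ => hasDerivAt_exp_mul_cos h s t)
    (by apply Continuous.intervalIntegrable; fun_prop)]
  simp only [mul_zero, exp_zero, zero_add, one_mul, sub_div]

lemma rockingMelnikov_eq_neg_two_mul_integral {C₁ C₂ a ω : ℝ} {n : ℕ} (hn : Odd n)
    (hωa : ω * a = n * π) (t₀ : ℝ) :
    rockingMelnikov C₁ C₂ a ω t₀ =
      -(2 * ∫ t in (0:ℝ)..a, (C₁ * exp t - C₂ * exp (-t)) * cos (ω * (t + t₀))) := by
  have hshift := intervalIntegral.integral_comp_add_right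
    (fun t => (-C₁ * exp (t - a) + C₂ * exp (-t + a)) * cos (ω * (t + t₀))) (a := 0) (b := a) a
  rw [zero_add, ← two_mul] at hshift
  rw [rockingMelnikov, ← hshift, two_mul]
  congr 2
  refine intervalIntegral.integral_congr fun t _ => ?_
  have hcos : cos (ω * (t + a + t₀)) = -cos (ω * (t + t₀)) := by
    rw [← cos_add_odd_mul_pi hn, ← hωa]
    congr 1
    ring
  rw [add_sub_cancel_right, show -(t + a) + a = -t by ring, hcos]
  ring

lemma integral_half_orbit {C₁ C₂ a ω : ℝ} {n : ℕ} (hn : Odd n) (hωa : ω * a = n * π)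
    (hC₁ : C₁ * (exp a + 1) = -1) (hC₂ : C₂ * (exp (-a) + 1) = -1) (t₀ : ℝ) :
    ∫ t in (0:ℝ)..a, (C₁ * exp t - C₂ * exp (-t)) * cos (ω * (t + t₀)) =
      2 * cos (ω * t₀) / (ω ^ 2 + 1) := by
  have hcos : cos (ω * (a + t₀)) = -cos (ω * t₀) := by
    rw [mul_add, hωa, add_comm, cos_add_odd_mul_pi hn]
  have hsin : sin (ω * (a + t₀)) = -sin (ω * t₀) := by
    rw [mul_add, hωa, add_comm, sin_add_odd_mul_pi hn]
  have hexp := integral_exp_mul_cos (c := 1) (ω := ω) (by positivity) t₀ a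
  have hexp_neg := integral_exp_mul_cos (c := -1) (ω := ω) (by positivity) t₀ a
  simp only [one_mul, neg_one_mul, one_pow, neg_one_sq, add_comm 1 (ω ^ 2)] at hexp hexp_neg
  have hint : ∀ c : ℝ, IntervalIntegrable (fun t => exp (c * t) * cos (ω * (t + t₀)))
      MeasureTheory.volume 0 a := fun c => by
    apply Continuous.intervalIntegrable; fun_prop
  simp only [sub_mul, mul_assoc]
  rw [intervalIntegral.integral_sub, intervalIntegral.integral_const_mul,
    intervalIntegral.integral_const_mul, hexp, hexp_neg, hcos, hsin]
  · rw [← mul_div_assoc, ← mul_div_assoc, ← sub_div]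
    congr 1
    linear_combination
      -(cos (ω * t₀) + ω * sin (ω * t₀)) * hC₁ - (cos (ω * t₀) - ω * sin (ω * t₀)) * hC₂
  · simpa using (hint 1).const_mul C₁
  · simpa using (hint (-1)).const_mul C₂

lemma mul_exp_add_one_eq_neg_one_of_ybar {a ybar C₁ C₂ : ℝ}
    (hybar : ybar = (exp a - 1) / (exp a + 1)) (hC₁ : C₁ = (ybar - 1) / 2)
    (hC₂ : C₂ = -(ybar + 1) / 2) :
    C₁ * (exp a + 1) = -1 ∧ C₂ * (exp (-a) + 1) = -1 := by
  subst hC₁ hC₂ hybar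
  have hpos := exp_pos a
  constructor
  · field_simp
    ring
  · rw [exp_neg]
    field_simp
    ring

theorem rocking_block_melnikov_m1_general (ω T : ℝ) (hω : 0 < ω) (hT : T = 2 * Real.pi / ω)
    (n : ℕ) (hodd : Odd n)
    (ybar C₁ C₂ : ℝ)
    (hybar : ybar = (Real.exp ((n : ℝ) * T / 2) - 1) / (Real.exp ((n : ℝ) * T / 2) + 1))
    (hC₁ : C₁ = (ybar - 1) / 2) (hC₂ : C₂ = -(ybar + 1) / 2) :
    (∀ t₀ : ℝ, rockingMelnikov C₁ C₂ ((n : ℝ) * T / 2) ω t₀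
        = -(4 / (ω ^ 2 + 1)) * Real.cos (ω * t₀)) ∧
    (∀ t₀ ∈ Set.Ico (0:ℝ) T,
        (rockingMelnikov C₁ C₂ ((n : ℝ) * T / 2) ω t₀ = 0 ↔
          t₀ = T / 4 ∨ t₀ = 3 * T / 4)) ∧
    deriv (rockingMelnikov C₁ C₂ ((n : ℝ) * T / 2) ω) (T / 4) ≠ 0 ∧
    deriv (rockingMelnikov C₁ C₂ ((n : ℝ) * T / 2) ω) (3 * T / 4) ≠ 0 := by
  have hωa : ω * (n * T / 2) = n * π := by rw [hT]; field_simp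
  set a := (n : ℝ) * T / 2
  obtain ⟨hC₁', hC₂'⟩ := mul_exp_add_one_eq_neg_one_of_ybar hybar hC₁ hC₂
  have hM : rockingMelnikov C₁ C₂ a ω = fun t₀ => -(4 / (ω ^ 2 + 1)) * cos (ω * t₀) := by
    funext t₀
    rw [rockingMelnikov_eq_neg_two_mul_integral hodd hωa,
      integral_half_orbit hodd hωa hC₁' hC₂']
    ring
  have hK : 0 < 4 / (ω ^ 2 + 1) * ω := by positivity
  have hquarter : ω * (T / 4) = π / 2 := by rw [hT]; field_simp; ring
  have hquarter₃ : ω * (3 * T / 4) = π / 2 + π := by rw [hT]; field_simp; ring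
  refine ⟨congrFun hM, fun t₀ ht₀ => ?_, ?_, ?_⟩
  · have hωt₀ : ω * t₀ ∈ Set.Ico 0 (2 * π) := by
      obtain ⟨ht₀, ht₀T⟩ := ht₀
      rw [hT, lt_div_iff₀ hω, mul_comm] at ht₀T
      exact ⟨mul_nonneg hω.le ht₀, ht₀T⟩
    rw [hM, mul_eq_zero, or_iff_right (neg_ne_zero.mpr (by positivity)),
      cos_eq_zero_iff_of_mem_Ico hωt₀, ← hquarter₃, ← hquarter, mul_right_inj' hω.ne',
      mul_right_inj' hω.ne']
  · rw [hM, (hasDerivAt_const_mul_cos_mul _ ω _).deriv, hquarter, sin_pi_div_two]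
    simpa using hK.ne'
  · rw [hM, (hasDerivAt_const_mul_cos_mul _ ω _).deriv, hquarter₃, sin_add_pi, sin_pi_div_two]
    simpa using hK.ne'

/-- for the linearized rocking block with `T = 2π/ω`, `n` odd,
`ȳ₀ = (e^{nT/2} − 1)/(e^{nT/2} + 1)`, `C₁ = (ȳ₀ − 1)/2`, `C₂ = −(ȳ₀ + 1)/2`,
the subharmonic Melnikov function equals `−(4/(ω² + 1)) cos(ω t₀)`; in
particular it has exactly two zeros in `[0, T)`, at `T/4` and `3T/4`, and both
are simple. -/
theorem rocking_block_melnikov_m1 (ω T : ℝ) (hω : 0 < ω) (hT : T = 2 * Real.pi / ω)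
    (n : ℕ) (hodd : Odd n) (hn : 0 < n)
    (ybar C₁ C₂ : ℝ)
    (hybar : ybar = (Real.exp ((n : ℝ) * T / 2) - 1) / (Real.exp ((n : ℝ) * T / 2) + 1))
    (hC₁ : C₁ = (ybar - 1) / 2) (hC₂ : C₂ = -(ybar + 1) / 2) :
    (∀ t₀ : ℝ, rockingMelnikov C₁ C₂ ((n : ℝ) * T / 2) ω t₀
        = -(4 / (ω ^ 2 + 1)) * Real.cos (ω * t₀)) ∧
    (∀ t₀ ∈ Set.Ico (0:ℝ) T,
        (rockingMelnikov C₁ C₂ ((n : ℝ) * T / 2) ω t₀ = 0 ↔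
          t₀ = T / 4 ∨ t₀ = 3 * T / 4)) ∧
    deriv (rockingMelnikov C₁ C₂ ((n : ℝ) * T / 2) ω) (T / 4) ≠ 0 ∧
    deriv (rockingMelnikov C₁ C₂ ((n : ℝ) * T / 2) ω) (3 * T / 4) ≠ 0 :=
  rocking_block_melnikov_m1_general ω T hω hT n hodd ybar C₁ C₂ hybar hC₁ hC₂
end
end

section
/- Let ω > 0, T = 2π/ω, let n and m be relatively prime positive integers with m > 1, set τ = nT/m, ȳ₀ = (e^{τ/2} − 1)/(e^{τ/2} + 1), C₁ = (ȳ₀ − 1)/2 and C₂ = −(ȳ₀ + 1)/2. Then for every t₀ ∈ ℝ, Σ_{j=0}^{m−1} [ ∫₀^{τ/2} (C₁ eᵗ − C₂ e^{−t}) cos(ω(t + t₀ + jτ)) dt + ∫_{τ/2}^{τ} (−C₁ e^{t − τ/2} + C₂ e^{−t + τ/2}) cos(ω(t + t₀ + jτ)) dt ] = 0; that is, the subharmonic Melnikov function M^{n,m} of the linearized rocking block vanishes identically whenever m > 1. -/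
section aux

/-- Sum of `m`-th roots of unity type exponentials vanishes. -/
lemma melnikov_exp_sum (θ : ℝ) (m : ℕ) (hm : 1 < m)
    (hzm : Complex.exp (θ * Complex.I) ^ m = 1)
    (hz1 : Complex.exp (θ * Complex.I) ≠ 1) (x : ℝ) :
    ∑ j ∈ Finset.range m, Complex.exp (((x + (j : ℝ) * θ : ℝ) : ℂ) * Complex.I) = 0 := by
  have hgeom : ∑ j ∈ Finset.range m, Complex.exp (θ * Complex.I) ^ j = 0 := by
    rw [geom_sum_eq hz1, hzm, sub_self, zero_div]
  calc ∑ j ∈ Finset.range m, Complex.exp (((x + (j : ℝ) * θ : ℝ) : ℂ) * Complex.I)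
      = ∑ j ∈ Finset.range m,
          Complex.exp ((x : ℂ) * Complex.I) * Complex.exp (θ * Complex.I) ^ j := by
        refine Finset.sum_congr rfl fun j _ => ?_
        rw [← Complex.exp_nat_mul, ← Complex.exp_add]
        congr 1
        push_cast
        ring
    _ = Complex.exp ((x : ℂ) * Complex.I) * ∑ j ∈ Finset.range m,
          Complex.exp (θ * Complex.I) ^ j := by rw [Finset.mul_sum]
    _ = 0 := by rw [hgeom, mul_zero]

end aux

/-- vanishing of the subharmonic Melnikov function `M^{n,m}` of
the linearized rocking block for `m > 1`.  With `T = 2π/ω`, `n, m` relatively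
prime, `m > 1`, `τ = nT/m`, `ȳ₀ = (e^{τ/2} − 1)/(e^{τ/2} + 1)`,
`C₁ = (ȳ₀ − 1)/2`, `C₂ = −(ȳ₀ + 1)/2`, the sum over the `m` repetitions of the
unperturbed periodic orbit of the Melnikov integrals vanishes for every `t₀`. -/
theorem rocking_block_melnikov_m_gt_one (ω T : ℝ) (hω : 0 < ω)
    (hT : T = 2 * Real.pi / ω) (n m : ℕ) (hn : 0 < n) (hm : 1 < m)
    (hcop : Nat.Coprime n m) (τ ybar C₁ C₂ : ℝ)
    (hτ : τ = (n : ℝ) * T / m)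
    (hybar : ybar = (Real.exp (τ / 2) - 1) / (Real.exp (τ / 2) + 1))
    (hC₁ : C₁ = (ybar - 1) / 2) (hC₂ : C₂ = -(ybar + 1) / 2) :
    ∀ t₀ : ℝ,
      (∑ j ∈ Finset.range m,
        ((∫ t in (0:ℝ)..(τ / 2),
            (C₁ * Real.exp t - C₂ * Real.exp (-t)) *
              Real.cos (ω * (t + t₀ + (j : ℝ) * τ))) +
          ∫ t in (τ / 2)..τ,
            (-C₁ * Real.exp (t - τ / 2) + C₂ * Real.exp (-t + τ / 2)) *
              Real.cos (ω * (t + t₀ + (j : ℝ) * τ)))) = 0 := by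
  intro t₀
  have hω' : ω ≠ 0 := ne_of_gt hω
  have hm0 : (m : ℝ) ≠ 0 := Nat.cast_ne_zero.mpr (by omega)
  have hπ : Real.pi ≠ 0 := Real.pi_ne_zero
  set θ : ℝ := ω * τ with hθdef
  have hθ : (m : ℝ) * θ = (n : ℝ) * (2 * Real.pi) := by
    rw [hθdef, hτ, hT]
    field_simp
  -- z^m = 1
  have hzm : Complex.exp ((θ : ℂ) * Complex.I) ^ m = 1 := by
    rw [← Complex.exp_nat_mul]
    have h1 : (m : ℂ) * ((θ : ℂ) * Complex.I) = ((n : ℤ) : ℂ) * (2 * (Real.pi : ℂ) * Complex.I) := by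
      have : ((m : ℝ) * θ : ℂ) = ((n : ℝ) * (2 * Real.pi) : ℂ) := by exact_mod_cast hθ
      push_cast at this ⊢
      rw [show (m : ℂ) * ((θ : ℂ) * Complex.I) = ((m : ℂ) * θ) * Complex.I by ring, this]
      ring
    rw [h1, Complex.exp_int_mul_two_pi_mul_I]
  -- z ≠ 1
  have hz1 : Complex.exp ((θ : ℂ) * Complex.I) ≠ 1 := by
    intro h
    obtain ⟨k, hk⟩ := Complex.exp_eq_one_iff.mp h
    have hk' : (θ : ℂ) = (k : ℂ) * (2 * Real.pi) := by
      have hI : (Complex.I : ℂ) ≠ 0 := Complex.I_ne_zero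
      exact mul_right_cancel₀ hI (by rw [hk]; ring :
        (θ : ℂ) * Complex.I = ((k : ℂ) * (2 * Real.pi)) * Complex.I)
    have hθR : θ = (k : ℝ) * (2 * Real.pi) := by exact_mod_cast hk'
    have hmk : (m : ℝ) * (k : ℝ) = (n : ℝ) := by
      have := hθ
      rw [hθR] at this
      have h2 : ((m : ℝ) * (k : ℝ)) * (2 * Real.pi) = (n : ℝ) * (2 * Real.pi) := by linarith [this]
      have h2π : (2 * Real.pi) ≠ 0 := by positivity
      exact mul_right_cancel₀ h2π h2
    have hmkZ : (m : ℤ) * k = (n : ℤ) := by exact_mod_cast hmk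
    have hdvd : (m : ℤ) ∣ (n : ℤ) := ⟨k, hmkZ.symm⟩
    have hdvdN : m ∣ n := Int.natCast_dvd_natCast.mp hdvd
    have := hcop.symm.eq_one_of_dvd hdvdN
    omega
  -- sums of cosines and sines vanish
  have hexp := melnikov_exp_sum θ m hm hzm hz1
  have hcos : ∀ x : ℝ, ∑ j ∈ Finset.range m, Real.cos (x + (j : ℝ) * θ) = 0 := by
    intro x
    have h := congrArg Complex.re (hexp x)
    rw [Complex.re_sum, Complex.zero_re] at h
    rw [← h]
    exact Finset.sum_congr rfl fun j _ => (Complex.exp_ofReal_mul_I_re _).symm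
  have hsin : ∀ x : ℝ, ∑ j ∈ Finset.range m, Real.sin (x + (j : ℝ) * θ) = 0 := by
    intro x
    have h := congrArg Complex.im (hexp x)
    rw [Complex.im_sum, Complex.zero_im] at h
    rw [← h]
    exact Finset.sum_congr rfl fun j _ => (Complex.exp_ofReal_mul_I_im _).symm
  -- splitting an integral of g(t) cos(ω(t+s))
  have key : ∀ (a b : ℝ) (g : ℝ → ℝ), Continuous g → ∀ s : ℝ,
      (∫ t in a..b, g t * Real.cos (ω * (t + s))) =
        Real.cos (ω * s) * (∫ t in a..b, g t * Real.cos (ω * t))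
          - Real.sin (ω * s) * (∫ t in a..b, g t * Real.sin (ω * t)) := by
    intro a b g hg s
    have h1 : (∫ t in a..b, g t * Real.cos (ω * (t + s)))
        = ∫ t in a..b, (Real.cos (ω * s) * (g t * Real.cos (ω * t))
            - Real.sin (ω * s) * (g t * Real.sin (ω * t))) := by
      refine intervalIntegral.integral_congr fun t _ => ?_
      rw [show ω * (t + s) = ω * t + ω * s by ring, Real.cos_add]
      ring
    have hi1 : IntervalIntegrable (fun t => Real.cos (ω * s) * (g t * Real.cos (ω * t)))
        MeasureTheory.volume a b := by
      apply Continuous.intervalIntegrable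
      fun_prop
    have hi2 : IntervalIntegrable (fun t => Real.sin (ω * s) * (g t * Real.sin (ω * t)))
        MeasureTheory.volume a b := by
      apply Continuous.intervalIntegrable
      fun_prop
    rw [h1, intervalIntegral.integral_sub hi1 hi2,
      intervalIntegral.integral_const_mul, intervalIntegral.integral_const_mul]
  -- rewrite each summand
  set g₁ : ℝ → ℝ := fun t => C₁ * Real.exp t - C₂ * Real.exp (-t) with hg₁
  set g₂ : ℝ → ℝ := fun t => -C₁ * Real.exp (t - τ / 2) + C₂ * Real.exp (-t + τ / 2) with hg₂
  have hg₁c : Continuous g₁ := by rw [hg₁]; fun_prop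
  have hg₂c : Continuous g₂ := by rw [hg₂]; fun_prop
  set A : ℝ := (∫ t in (0:ℝ)..(τ / 2), g₁ t * Real.cos (ω * t))
      + ∫ t in (τ / 2)..τ, g₂ t * Real.cos (ω * t) with hA
  set B : ℝ := (∫ t in (0:ℝ)..(τ / 2), g₁ t * Real.sin (ω * t))
      + ∫ t in (τ / 2)..τ, g₂ t * Real.sin (ω * t) with hB
  have hterm : ∀ j ∈ Finset.range m,
      ((∫ t in (0:ℝ)..(τ / 2),
          (C₁ * Real.exp t - C₂ * Real.exp (-t)) *
            Real.cos (ω * (t + t₀ + (j : ℝ) * τ))) +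
        ∫ t in (τ / 2)..τ,
          (-C₁ * Real.exp (t - τ / 2) + C₂ * Real.exp (-t + τ / 2)) *
            Real.cos (ω * (t + t₀ + (j : ℝ) * τ)))
      = Real.cos (ω * t₀ + (j : ℝ) * θ) * A - Real.sin (ω * t₀ + (j : ℝ) * θ) * B := by
    intro j _
    have k1 := key 0 (τ / 2) g₁ hg₁c (t₀ + (j : ℝ) * τ)
    have k2 := key (τ / 2) τ g₂ hg₂c (t₀ + (j : ℝ) * τ)
    have e1 : (∫ t in (0:ℝ)..(τ / 2),
        (C₁ * Real.exp t - C₂ * Real.exp (-t)) *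
          Real.cos (ω * (t + t₀ + (j : ℝ) * τ)))
        = ∫ t in (0:ℝ)..(τ / 2), g₁ t * Real.cos (ω * (t + (t₀ + (j : ℝ) * τ))) := by
      refine intervalIntegral.integral_congr fun t _ => ?_
      rw [hg₁]
      ring_nf
    have e2 : (∫ t in (τ / 2)..τ,
        (-C₁ * Real.exp (t - τ / 2) + C₂ * Real.exp (-t + τ / 2)) *
          Real.cos (ω * (t + t₀ + (j : ℝ) * τ)))
        = ∫ t in (τ / 2)..τ, g₂ t * Real.cos (ω * (t + (t₀ + (j : ℝ) * τ))) := by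
      refine intervalIntegral.integral_congr fun t _ => ?_
      rw [hg₂]
      ring_nf
    have harg : ω * (t₀ + (j : ℝ) * τ) = ω * t₀ + (j : ℝ) * θ := by rw [hθdef]; ring
    rw [e1, e2, k1, k2, harg, hA, hB]
    ring
  rw [Finset.sum_congr rfl hterm, Finset.sum_sub_distrib, ← Finset.sum_mul, ← Finset.sum_mul,
    hcos (ω * t₀), hsin (ω * t₀)]
  ring
end
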